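/- For each fixed z ∈ ℝ, the function w ↦ w f_z(w) is nondecreasing, where f_z is the solution of the Stein equation f'(w) - w f(w) = 1{w ≤ z} - Φ(z). -/

import Mathlib

open MeasureTheory ProbabilityTheory Real

/-- The standard normal distribution function. -/
noncomputable def stdNormalCDF (z : ℝ) : ℝ :=
  (ProbabilityTheory.gaussianReal 0 1 (Set.Iic z)).toReal

/-- The bounded solution of the Stein equation `f'(w) - w f(w) = 1{w ≤ z} - Φ(z)`. -/
noncomputable def steinSolution (z w : ℝ) : ℝ :=
  if w ≤ z then
    Real.sqrt (2 * Real.pi) * Real.exp (w ^ 2 / 2) * stdNormalCDF w * (1 - stdNormalCDF z)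
  else
    Real.sqrt (2 * Real.pi) * Real.exp (w ^ 2 / 2) * stdNormalCDF z * (1 - stdNormalCDF w)

open Filter Topology

noncomputable def sPDF (w : ℝ) : ℝ := (Real.sqrt (2 * Real.pi))⁻¹ * Real.exp (-(w^2) / 2)

lemma sPDF_eq (w : ℝ) : gaussianPDFReal 0 1 w = sPDF w := by
  simp [gaussianPDFReal, sPDF]

lemma cdf_eq (z : ℝ) : stdNormalCDF z = cdf (gaussianReal 0 1) z := by
  rw [cdf_eq_real, stdNormalCDF, measureReal_def]

lemma cdf_int (z : ℝ) : stdNormalCDF z = ∫ t in Set.Iic z, sPDF t := by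
  rw [stdNormalCDF, gaussianReal_apply_eq_integral 0 one_ne_zero (Set.Iic z),
    ENNReal.toReal_ofReal]
  · simp_rw [sPDF_eq]
  · exact integral_nonneg fun t => gaussianPDFReal_nonneg 0 1 t

lemma cdf_nonneg' (z : ℝ) : 0 ≤ stdNormalCDF z := ENNReal.toReal_nonneg

lemma cdf_le_one' (z : ℝ) : stdNormalCDF z ≤ 1 := by
  rw [cdf_eq]; exact cdf_le_one _ _

lemma cdf_tendsto_atBot : Tendsto stdNormalCDF atBot (𝓝 0) := by
  have : stdNormalCDF = fun z => cdf (gaussianReal 0 1) z := funext cdf_eq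
  rw [this]; exact tendsto_cdf_atBot _

lemma sPDF_cont : Continuous sPDF := by
  unfold sPDF; fun_prop

lemma sPDF_integrable : Integrable sPDF := by
  have := integrable_gaussianPDFReal 0 1
  simpa [funext sPDF_eq] using this

lemma cdf_hasDeriv (w : ℝ) : HasDerivAt stdNormalCDF (sPDF w) w := by
  have key : ∀ x : ℝ, stdNormalCDF x = stdNormalCDF 0 + ∫ t in (0:ℝ)..x, sPDF t := by
    intro x
    have := intervalIntegral.integral_Iic_sub_Iic
      (sPDF_integrable.integrableOn (s := Set.Iic 0)) (sPDF_integrable.integrableOn (s := Set.Iic x))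
    rw [← cdf_int, ← cdf_int] at this
    linarith
  have h : HasDerivAt (fun x => stdNormalCDF 0 + ∫ t in (0:ℝ)..x, sPDF t) (sPDF w) w := by
    exact (intervalIntegral.integral_hasDerivAt_right
      (sPDF_integrable.intervalIntegrable (a := 0) (b := w))
      (sPDF_integrable.aestronglyMeasurable.stronglyMeasurableAtFilter (l := 𝓝 w))
      (sPDF_cont.continuousAt)).const_add (stdNormalCDF 0)
  have heq : stdNormalCDF = (fun x => stdNormalCDF 0 + ∫ t in (0:ℝ)..x, sPDF t) := funext key
  rw [heq]; exact h

noncomputable def G (w : ℝ) : ℝ := Real.sqrt (2 * Real.pi) * Real.exp (w ^ 2 / 2) * stdNormalCDF w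

lemma sqrt2pi_pos : 0 < Real.sqrt (2 * Real.pi) :=
  Real.sqrt_pos.2 (by positivity)

lemma exp_half_hasDeriv (w : ℝ) :
    HasDerivAt (fun x : ℝ => Real.exp (x ^ 2 / 2)) (w * Real.exp (w ^ 2 / 2)) w := by
  have h1 : HasDerivAt (fun x : ℝ => x ^ 2 / 2) w w := by
    have := (hasDerivAt_pow 2 w).div_const 2
    simpa using this
  have := h1.exp
  simpa [mul_comm] using this

lemma G_hasDeriv (w : ℝ) : HasDerivAt G (w * G w + 1) w := by
  have h := ((exp_half_hasDeriv w).mul (cdf_hasDeriv w)).const_mul (Real.sqrt (2 * Real.pi))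
  have hG : G = fun y => Real.sqrt (2 * Real.pi) * (Real.exp (y ^ 2 / 2) * stdNormalCDF y) := by
    funext y; unfold G; ring
  have hs : Real.sqrt (2 * Real.pi) ≠ 0 := ne_of_gt sqrt2pi_pos
  have hexp : Real.exp (w ^ 2 / 2) * Real.exp (-(w ^ 2) / 2) = 1 := by
    rw [← Real.exp_add]
    ring_nf
    exact Real.exp_zero
  have heq : Real.sqrt (2 * Real.pi) * (w * Real.exp (w ^ 2 / 2) * stdNormalCDF w
      + Real.exp (w ^ 2 / 2) * sPDF w) = w * G w + 1 := by
    unfold G sPDF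
    have h2 : Real.sqrt (2 * Real.pi) * (Real.exp (w ^ 2 / 2) *
        ((Real.sqrt (2 * Real.pi))⁻¹ * Real.exp (-(w ^ 2) / 2))) = 1 := by
      calc Real.sqrt (2 * Real.pi) * (Real.exp (w ^ 2 / 2) *
          ((Real.sqrt (2 * Real.pi))⁻¹ * Real.exp (-(w ^ 2) / 2)))
          = (Real.sqrt (2 * Real.pi) * (Real.sqrt (2 * Real.pi))⁻¹) *
            (Real.exp (w ^ 2 / 2) * Real.exp (-(w ^ 2) / 2)) := by ring
        _ = 1 := by rw [mul_inv_cancel₀ hs, hexp, mul_one]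
    rw [mul_add]
    rw [h2]
    ring
  rw [← heq, hG]
  exact h

noncomputable def Q (w : ℝ) : ℝ := stdNormalCDF w + w * sPDF w / (1 + w ^ 2)

lemma Q_hasDeriv (w : ℝ) : HasDerivAt Q (2 * sPDF w / (1 + w ^ 2) ^ 2) w := by
  have hden : (1 : ℝ) + w ^ 2 ≠ 0 := by positivity
  have hpdf : HasDerivAt sPDF (-w * sPDF w) w := by
    have h1 : HasDerivAt (fun x : ℝ => -(x ^ 2) / 2) (-w) w := by
      have := ((hasDerivAt_pow 2 w).neg).div_const 2
      exact this.congr_deriv (by norm_num; ring)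
    have := (h1.exp).const_mul (Real.sqrt (2 * Real.pi))⁻¹
    unfold sPDF
    exact this.congr_deriv (by ring)
  have hnum : HasDerivAt (fun x => x * sPDF x) (1 * sPDF w + w * (-w * sPDF w)) w :=
    (hasDerivAt_id w).mul hpdf
  have hd : HasDerivAt (fun x : ℝ => 1 + x ^ 2) (2 * w) w := by
    have := (hasDerivAt_pow 2 w).const_add 1
    simpa using this
  have h := (cdf_hasDeriv w).add (hnum.div hd hden)
  refine h.congr_deriv ?_
  have hpos : 0 < sPDF w := by unfold sPDF; positivity
  field_simp
  ring

lemma sPDF_pos (w : ℝ) : 0 < sPDF w := by unfold sPDF; positivity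

lemma mul_sPDF_tendsto_atBot : Tendsto (fun w => w * sPDF w) atBot (𝓝 0) := by
  have h1 : Tendsto (fun w : ℝ => w * sPDF w) atBot (𝓝 0) := by
    have key : Tendsto (fun x : ℝ => x * Real.exp (-(x ^ 2) / 2)) atTop (𝓝 0) := by
      have hb : ∀ᶠ x : ℝ in atTop, ‖x * Real.exp (-(x ^ 2) / 2)‖ ≤ x * Real.exp (-x) := by
        filter_upwards [eventually_ge_atTop (2:ℝ)] with x hx
        rw [Real.norm_eq_abs, abs_of_nonneg (by positivity)]
        have : Real.exp (-(x ^ 2) / 2) ≤ Real.exp (-x) :=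
          Real.exp_le_exp.2 (by nlinarith)
        nlinarith [Real.exp_pos (-x), Real.exp_pos (-(x^2)/2)]
      have hx : Tendsto (fun x : ℝ => x * Real.exp (-x)) atTop (𝓝 0) := by
        simpa using Real.tendsto_pow_mul_exp_neg_atTop_nhds_zero 1
      exact squeeze_zero_norm' hb hx
    have hcomp : Tendsto (fun w : ℝ => (-w) * Real.exp (-((-w) ^ 2) / 2)) atBot (𝓝 0) :=
      key.comp tendsto_neg_atBot_atTop
    have : Tendsto (fun w : ℝ => w * Real.exp (-(w ^ 2) / 2)) atBot (𝓝 0) := by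
      have := hcomp.neg
      simp only [neg_neg, neg_zero] at this
      convert this using 2 with w
      ring_nf
    have := this.const_mul (Real.sqrt (2 * Real.pi))⁻¹
    simp only [mul_zero] at this
    convert this using 2 with w
    unfold sPDF
    ring
  exact h1

lemma Q_tendsto_atBot : Tendsto Q atBot (𝓝 0) := by
  have h2 : Tendsto (fun w : ℝ => w * sPDF w / (1 + w ^ 2)) atBot (𝓝 0) := by
    have hg : Tendsto (fun w : ℝ => ‖w * sPDF w‖) atBot (𝓝 0) := by
      simpa using mul_sPDF_tendsto_atBot.norm
    refine squeeze_zero_norm ?_ hg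
    intro w
    rw [norm_div]
    have h1 : (1:ℝ) ≤ ‖1 + w ^ 2‖ := by
      rw [Real.norm_eq_abs, abs_of_pos (by positivity)]; nlinarith [sq_nonneg w]
    exact div_le_self (norm_nonneg _) h1
  have := cdf_tendsto_atBot.add h2
  rw [add_zero] at this
  exact this

lemma sqrt_exp_sPDF (w : ℝ) : Real.sqrt (2 * Real.pi) * Real.exp (w ^ 2 / 2) * sPDF w = 1 := by
  have hs : Real.sqrt (2 * Real.pi) ≠ 0 := ne_of_gt sqrt2pi_pos
  have hexp : Real.exp (w ^ 2 / 2) * Real.exp (-(w ^ 2) / 2) = 1 := by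
    rw [← Real.exp_add]
    ring_nf
    exact Real.exp_zero
  unfold sPDF
  calc Real.sqrt (2 * Real.pi) * Real.exp (w ^ 2 / 2) *
      ((Real.sqrt (2 * Real.pi))⁻¹ * Real.exp (-(w ^ 2) / 2))
      = (Real.sqrt (2 * Real.pi) * (Real.sqrt (2 * Real.pi))⁻¹) *
        (Real.exp (w ^ 2 / 2) * Real.exp (-(w ^ 2) / 2)) := by ring
    _ = 1 := by rw [mul_inv_cancel₀ hs, hexp, mul_one]

lemma Q_nonneg (w : ℝ) : 0 ≤ Q w := by
  have hmono : Monotone Q := by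
    have hdiff : ∀ x : ℝ, HasDerivAt Q (2 * sPDF x / (1 + x ^ 2) ^ 2) x := Q_hasDeriv
    apply StrictMono.monotone
    apply strictMono_of_deriv_pos
    intro x
    rw [(hdiff x).deriv]
    have := sPDF_pos x
    positivity
  refine le_of_tendsto Q_tendsto_atBot ?_
  filter_upwards [eventually_le_atBot w] with t ht
  exact hmono ht

lemma mono_G : Monotone (fun w => w * G w) := by
  have hderiv : ∀ w : ℝ, HasDerivAt (fun w => w * G w) ((1 + w ^ 2) * G w + w) w := by
    intro w
    have := (hasDerivAt_id w).mul (G_hasDeriv w)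
    exact this.congr_deriv (by change 1 * G w + w * (w * G w + 1) = _; ring)
  apply monotone_of_deriv_nonneg
  · exact fun w => (hderiv w).differentiableAt
  · intro w
    rw [(hderiv w).deriv]
    have hkey : (1 + w ^ 2) * G w + w
        = Real.sqrt (2 * Real.pi) * Real.exp (w ^ 2 / 2) * (1 + w ^ 2) * Q w := by
      have h4 := sqrt_exp_sPDF w
      have hden : (1 : ℝ) + w ^ 2 ≠ 0 := by positivity
      set S := Real.sqrt (2 * Real.pi) with hS
      unfold Q G
      rw [← hS]
      have h5 : S * Real.exp (w ^ 2 / 2) * (1 + w ^ 2) *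
          (stdNormalCDF w + w * sPDF w / (1 + w ^ 2))
          = (1 + w ^ 2) * (S * Real.exp (w ^ 2 / 2) * stdNormalCDF w)
            + w * (S * Real.exp (w ^ 2 / 2) * sPDF w) := by
        field_simp
      rw [h5, h4, mul_one]
    rw [hkey]
    have h1 : 0 ≤ Real.sqrt (2 * Real.pi) * Real.exp (w ^ 2 / 2) * (1 + w ^ 2) := by positivity
    exact mul_nonneg h1 (Q_nonneg w)

lemma sPDF_even (w : ℝ) : sPDF (-w) = sPDF w := by unfold sPDF; ring_nf

lemma cdf_neg (w : ℝ) : stdNormalCDF (-w) = 1 - stdNormalCDF w := by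
  have htot : (∫ t in Set.Iic w, sPDF t) + ∫ t in Set.Ioi w, sPDF t = 1 := by
    have h := integral_add_compl (μ := volume) (measurableSet_Iic (a := w)) sPDF_integrable
    rw [Set.compl_Iic] at h
    rw [h]
    have h1 : (∫ x, sPDF x) = ∫ x, gaussianPDFReal 0 1 x := by
      simp_rw [sPDF_eq]
    rw [h1, integral_gaussianPDFReal_eq_one 0 one_ne_zero]
  have hsym : (∫ t in Set.Iic (-w), sPDF t) = ∫ t in Set.Ioi w, sPDF t := by
    have h := integral_comp_neg_Iic (-w) sPDF
    simp_rw [sPDF_even] at h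
    rw [h, neg_neg]
  rw [cdf_int, cdf_int, hsym]
  linarith

lemma stein_left (z w : ℝ) (h : w ≤ z) :
    w * steinSolution z w = (1 - stdNormalCDF z) * (w * G w) := by
  rw [steinSolution, if_pos h]; unfold G; ring

lemma stein_right (z w : ℝ) (h : ¬ w ≤ z) :
    w * steinSolution z w = stdNormalCDF z * (-((-w) * G (-w))) := by
  rw [steinSolution, if_neg h]
  unfold G
  rw [cdf_neg]
  have : (-w) ^ 2 = w ^ 2 := by ring
  rw [this]
  ring

lemma junction (z : ℝ) :
    (1 - stdNormalCDF z) * (z * G z) = stdNormalCDF z * (-((-z) * G (-z))) := by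
  unfold G
  rw [cdf_neg]
  have : (-z) ^ 2 = z ^ 2 := by ring
  rw [this]
  ring

/-- For each fixed `z`, the map `w ↦ w f_z(w)` is nondecreasing. -/
theorem stmt5 (z : ℝ) : Monotone (fun w : ℝ => w * steinSolution z w) := by
  intro a b hab
  simp only
  have hΦz0 : 0 ≤ stdNormalCDF z := cdf_nonneg' z
  have hΦz1 : stdNormalCDF z ≤ 1 := cdf_le_one' z
  by_cases ha : a ≤ z
  · by_cases hb : b ≤ z
    · rw [stein_left z a ha, stein_left z b hb]
      exact mul_le_mul_of_nonneg_left (mono_G hab) (by linarith)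
    · push_neg at hb
      rw [stein_left z a ha, stein_right z b (not_le.2 hb)]
      calc (1 - stdNormalCDF z) * (a * G a)
          ≤ (1 - stdNormalCDF z) * (z * G z) :=
            mul_le_mul_of_nonneg_left (mono_G ha) (by linarith)
        _ = stdNormalCDF z * (-((-z) * G (-z))) := junction z
        _ ≤ stdNormalCDF z * (-((-b) * G (-b))) := by
            apply mul_le_mul_of_nonneg_left _ hΦz0
            have : (-b) * G (-b) ≤ (-z) * G (-z) := mono_G (by linarith)
            linarith
  · have hb : ¬ b ≤ z := fun h => ha (hab.trans h)
    rw [stein_right z a ha, stein_right z b hb]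
    apply mul_le_mul_of_nonneg_left _ hΦz0
    have : (-b) * G (-b) ≤ (-a) * G (-a) := mono_G (by linarith)
    linarith
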